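/- (CR 3) A neutral, well-typed term all of whose one-step reducts are reducible is itself reducible: if M is neutral, [] ⊢ M : A, and Red M' A for every M' with M → M', then Red M A. -/

import Mathlib

inductive Ty : Type
  | iota : Ty
  | arr : Ty → Ty → Ty

inductive Tm : Type
  | var : ℕ → Tm
  | const : Tm
  | app : Tm → Tm → Tm
  | abs : Ty → Tm → Tm

def liftRen (ρ : ℕ → ℕ) : ℕ → ℕ
  | 0 => 0
  | n + 1 => ρ n + 1

def rename (ρ : ℕ → ℕ) : Tm → Tm
  | Tm.var n => Tm.var (ρ n)
  | Tm.const => Tm.const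
  | Tm.app m n => Tm.app (rename ρ m) (rename ρ n)
  | Tm.abs a r => Tm.abs a (rename (liftRen ρ) r)

def liftSub (σ : ℕ → Tm) : ℕ → Tm
  | 0 => Tm.var 0
  | n + 1 => rename Nat.succ (σ n)

/-- Simultaneous capture-avoiding substitution. -/
def subst (σ : ℕ → Tm) : Tm → Tm
  | Tm.var n => σ n
  | Tm.const => Tm.const
  | Tm.app m n => Tm.app (subst σ m) (subst σ n)
  | Tm.abs a r => Tm.abs a (subst (liftSub σ) r)

/-- `subst0 s t` is `t[0 := s]`. -/
def subst0 (s : Tm) (t : Tm) : Tm :=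
  subst (fun n => match n with | 0 => s | Nat.succ k => Tm.var k) t

inductive Typed : List Ty → Tm → Ty → Prop
  | var {Γ : List Ty} {n : ℕ} {a : Ty} :
      Γ[n]? = some a → Typed Γ (Tm.var n) a
  | const {Γ : List Ty} {a : Ty} : Typed Γ Tm.const a
  | app {Γ : List Ty} {m n : Tm} {a b : Ty} :
      Typed Γ m (Ty.arr a b) → Typed Γ n a → Typed Γ (Tm.app m n) b
  | abs {Γ : List Ty} {r : Tm} {a b : Ty} :
      Typed (a :: Γ) r b → Typed Γ (Tm.abs a r) (Ty.arr a b)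

/-- One-step (β) reduction. -/
inductive Step : Tm → Tm → Prop
  | beta {a : Ty} {r m : Tm} : Step (Tm.app (Tm.abs a r) m) (subst0 m r)
  | appl {m m' n : Tm} : Step m m' → Step (Tm.app m n) (Tm.app m' n)
  | appr {m n n' : Tm} : Step n n' → Step (Tm.app m n) (Tm.app m n')
  | abs {a : Ty} {r r' : Tm} : Step r r' → Step (Tm.abs a r) (Tm.abs a r')

/-- Strong normalization. -/
inductive SN : Tm → Prop
  | intro {M : Tm} : (∀ M', Step M M' → SN M') → SN M

/-- Tait-style reducibility, by recursion on the type. -/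
def Red : Tm → Ty → Prop
  | M, Ty.iota => Typed [] M Ty.iota ∧ SN M
  | M, Ty.arr a b => Typed [] M (Ty.arr a b) ∧ ∀ U, Red U a → Red (Tm.app M U) b

/-- A term is neutral if it is not an abstraction. -/
def Neutral (M : Tm) : Prop := ∀ (a : Ty) (r : Tm), M ≠ Tm.abs a r

/-!
Tait's method: by induction on the type `a`, prove simultaneously that reducible terms of
type `a` are strongly normalizing (CR 1) and that a well-typed neutral term whose reducts are
all reducible is reducible (CR 3). For `a → b`, CR 1 applies a reducible term to the reducible
neutral normal form `const : a`; CR 3 shows `Red (app M U) b` by induction on the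
strong normalization of `U`: since `M` is neutral, `app M U` has no head redex, so each of its
reducts is `app M' U` with `M → M'` or `app M U'` with `U → U'`, and the latter is reducible
because reducibility is closed under reduction (CR 2).
-/

theorem Typed.rename {Γ : List Ty} {t : Tm} {a : Ty} (h : Typed Γ t a) {Δ : List Ty}
    {ρ : ℕ → ℕ} (hρ : ∀ n b, Γ[n]? = some b → Δ[ρ n]? = some b) :
    Typed Δ (rename ρ t) a := by
  induction h generalizing Δ ρ with
  | var hv => exact .var (hρ _ _ hv)
  | const => exact .const
  | app _ _ ih₁ ih₂ => exact .app (ih₁ hρ) (ih₂ hρ)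
  | abs _ ih =>
    refine .abs (ih ?_)
    rintro (_ | n) c hc
    exacts [hc, hρ n c hc]

theorem Typed.subst {Γ : List Ty} {t : Tm} {a : Ty} (h : Typed Γ t a) {Δ : List Ty}
    {σ : ℕ → Tm} (hσ : ∀ n b, Γ[n]? = some b → Typed Δ (σ n) b) :
    Typed Δ (subst σ t) a := by
  induction h generalizing Δ σ with
  | var hv => exact hσ _ _ hv
  | const => exact .const
  | app _ _ ih₁ ih₂ => exact .app (ih₁ hσ) (ih₂ hσ)
  | abs _ ih =>
    refine .abs (ih ?_)
    rintro (_ | n) c hc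
    exacts [.var hc, (hσ n c hc).rename fun _ _ hb => hb]

theorem Typed.subst0 {Γ : List Ty} {r s : Tm} {a b : Ty} (hr : Typed (a :: Γ) r b)
    (hs : Typed Γ s a) : Typed Γ (subst0 s r) b := by
  refine hr.subst ?_
  rintro (_ | n) c hc
  exacts [Option.some_injective _ hc ▸ hs, .var hc]

theorem Typed.step {Γ : List Ty} {M M' : Tm} {a : Ty} (ht : Typed Γ M a) (hs : Step M M') :
    Typed Γ M' a := by
  induction hs generalizing Γ a with
  | beta =>
    obtain _ | _ | ⟨⟨⟩ | ⟨⟩ | ⟨⟩ | hr, hm⟩ := ht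
    exact hr.subst0 hm
  | appl _ ih =>
    obtain _ | _ | ⟨hm, hn⟩ := ht
    exact .app (ih hm) hn
  | appr _ ih =>
    obtain _ | _ | ⟨hm, hn⟩ := ht
    exact .app hm (ih hn)
  | abs _ ih =>
    obtain _ | _ | _ | hr := ht
    exact .abs (ih hr)

theorem SN.step {M M' : Tm} (h : SN M) (hs : Step M M') : SN M' := by
  obtain ⟨h⟩ := h
  exact h M' hs

theorem SN.of_app_left {M N : Tm} (h : SN (Tm.app M N)) : SN M := by
  generalize hMN : Tm.app M N = t at h
  induction h generalizing M with
  | intro _ ih =>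
    subst hMN
    exact .intro fun _ hs => ih _ (.appl hs) rfl

theorem neutral_app (M N : Tm) : Neutral (Tm.app M N) :=
  fun _ _ h => Tm.noConfusion h

theorem neutral_const : Neutral Tm.const :=
  fun _ _ h => Tm.noConfusion h

theorem Red.typed {M : Tm} {a : Ty} (h : Red M a) : Typed [] M a := by
  cases a <;> exact h.1

theorem Red.step {M M' : Tm} {a : Ty} (h : Red M a) (hs : Step M M') : Red M' a := by
  induction a generalizing M M' with
  | iota => exact ⟨h.1.step hs, h.2.step hs⟩
  | arr a b _ ihb => exact ⟨h.1.step hs, fun U hU => ihb (h.2 U hU) (.appl hs)⟩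

/-- The CR 3 property of a type. -/
def RedOfNeutral (a : Ty) : Prop :=
  ∀ M, Neutral M → Typed [] M a → (∀ M', Step M M' → Red M' a) → Red M a

theorem RedOfNeutral.red_const {a : Ty} (h : RedOfNeutral a) : Red Tm.const a :=
  h _ neutral_const .const fun _ hs => nomatch hs

theorem RedOfNeutral.red_app {M U : Tm} {a b : Ty} (hb : RedOfNeutral b) (hn : Neutral M)
    (ht : Typed [] M (Ty.arr a b)) (hM : ∀ M', Step M M' → Red M' (Ty.arr a b))
    (hSN : SN U) (hU : Red U a) : Red (Tm.app M U) b := by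
  induction hSN with
  | intro _ ih =>
    refine hb _ (neutral_app M _) (.app ht hU.typed) fun _ hs => ?_
    cases hs with
    | beta => exact absurd rfl (hn _ _)
    | appl hs => exact (hM _ hs).2 _ hU
    | appr hs => exact ih _ hs (hU.step hs)

theorem sn_of_red_and_redOfNeutral (a : Ty) : (∀ M, Red M a → SN M) ∧ RedOfNeutral a := by
  induction a with
  | iota =>
    exact ⟨fun _ h => h.2, fun _ _ ht hM => ⟨ht, .intro fun M' hs => (hM M' hs).2⟩⟩
  | arr a b iha ihb =>
    obtain ⟨sn_a, cr3_a⟩ := iha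
    obtain ⟨sn_b, cr3_b⟩ := ihb
    refine ⟨fun M h => (sn_b _ (h.2 _ cr3_a.red_const)).of_app_left, fun M hn ht hM => ?_⟩
    exact ⟨ht, fun U hU => cr3_b.red_app hn ht hM (sn_a U hU) hU⟩

theorem cr3 {M : Tm} {A : Ty} (hn : Neutral M) (ht : Typed [] M A)
    (h : ∀ M', Step M M' → Red M' A) : Red M A :=
  (sn_of_red_and_redOfNeutral A).2 M hn ht h
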